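/- Let m ≥ 2 be an even natural number and let ρ be an m×m positive semidefinite complex matrix with Tr(ρ) = 1 (a density matrix). Define f(ρ) = 1 − ∑_{i=1}^{m/2} [ (4i/(m²+2m))·Tr(ρ^i) + ((2m−4i+4)/(m²+2m))·Tr(ρ^{i+m/2}) ]. Then f(ρ) ≥ 0, and f(ρ) = 0 if and only if ρ is a pure state, i.e. ρ² = ρ. -/

import Mathlib

open ComplexOrder Matrix

theorem pow_conj_psd (m : ℕ) (ρ : Matrix (Fin m) (Fin m) ℂ) (hρ : ρ.PosSemidef) (k : ℕ) :
    ρ ^ k = (hρ.1.eigenvectorUnitary : Matrix (Fin m) (Fin m) ℂ) *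
      (diagonal (RCLike.ofReal ∘ hρ.1.eigenvalues)) ^ k *
      star (hρ.1.eigenvectorUnitary : Matrix (Fin m) (Fin m) ℂ) := by
  have hH := hρ.1
  set U : Matrix (Fin m) (Fin m) ℂ := (hH.eigenvectorUnitary : Matrix (Fin m) (Fin m) ℂ)
  set D : Matrix (Fin m) (Fin m) ℂ := diagonal (RCLike.ofReal ∘ hH.eigenvalues)
  have hUU : star U * U = 1 := (Matrix.mem_unitaryGroup_iff').mp hH.eigenvectorUnitary.2
  have hUU' : U * star U = 1 := (Matrix.mem_unitaryGroup_iff).mp hH.eigenvectorUnitary.2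
  conv_lhs => rw [hH.spectral_theorem]
  induction k with
  | zero => simp [hUU']
  | succ n ih =>
    rw [pow_succ, ih, pow_succ]
    calc U * D ^ n * star U * (U * D * star U)
        = U * D ^ n * ((star U * U) * (D * star U)) := by simp only [Matrix.mul_assoc]
      _ = U * (D ^ n * D) * star U := by
          rw [hUU, Matrix.one_mul]; simp only [Matrix.mul_assoc]

theorem trace_pow_psd (m : ℕ) (ρ : Matrix (Fin m) (Fin m) ℂ) (hρ : ρ.PosSemidef) (k : ℕ) :
    ((ρ ^ k).trace).re = ∑ i, (hρ.1.eigenvalues i) ^ k := by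
  have hUU : star (hρ.1.eigenvectorUnitary : Matrix (Fin m) (Fin m) ℂ) *
      (hρ.1.eigenvectorUnitary : Matrix (Fin m) (Fin m) ℂ) = 1 :=
    (Matrix.mem_unitaryGroup_iff').mp hρ.1.eigenvectorUnitary.2
  rw [pow_conj_psd m ρ hρ k, Matrix.trace_mul_cycle, hUU, Matrix.one_mul,
    Matrix.diagonal_pow, Matrix.trace_diagonal]
  rw [Complex.re_sum]
  simp [← Complex.ofReal_pow]


/-- The function `f` of the paper (even `m`):
`f(ρ) = 1 − ∑_{i=1}^{m/2} [ (4i/(m²+2m))·Tr(ρ^i)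
        + ((2m−4i+4)/(m²+2m))·Tr(ρ^{i+m/2}) ]`. -/
noncomputable def fEven (m : ℕ) (ρ : Matrix (Fin m) (Fin m) ℂ) : ℝ :=
  1 - ∑ i ∈ Finset.Icc 1 (m / 2),
    ((4 * (i : ℝ)) / ((m : ℝ) ^ 2 + 2 * m) * ((ρ ^ i).trace).re +
     (2 * (m : ℝ) - 4 * i + 4) / ((m : ℝ) ^ 2 + 2 * m) * ((ρ ^ (i + m / 2)).trace).re)

/-- For an even `m ≥ 2` and an `m×m` density matrix `ρ`, one has `f(ρ) ≥ 0`,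
with equality if and only if `ρ` is a pure state (`ρ² = ρ`). -/
theorem fEven_nonneg_eq_zero_iff_pure (m : ℕ) (hm : 2 ≤ m) (hme : Even m)
    (ρ : Matrix (Fin m) (Fin m) ℂ) (hρ : ρ.PosSemidef) (htr : ρ.trace = 1) :
    0 ≤ fEven m ρ ∧ (fEven m ρ = 0 ↔ ρ ^ 2 = ρ) := by
  have h2n : 2 * (m / 2) = m := by
    obtain ⟨r, hr⟩ := hme; omega
  set n := m / 2 with hn
  have hn1 : 1 ≤ n := by omega
  set lam := hρ.1.eigenvalues with hlam
  have hnn : ∀ i, 0 ≤ lam i := fun i => hρ.eigenvalues_nonneg i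
  have ht : ∀ k, ((ρ ^ k).trace).re = ∑ i, lam i ^ k := trace_pow_psd m ρ hρ
  have hsum : ∑ i, lam i = 1 := by
    have h1 := ht 1
    rw [pow_one, htr, Complex.one_re] at h1
    simpa using h1.symm
  have hle1 : ∀ i, lam i ≤ 1 := fun i =>
    (Finset.single_le_sum (fun j _ => hnn j) (Finset.mem_univ i)).trans hsum.le
  have htle : ∀ k, 1 ≤ k → ((ρ ^ k).trace).re ≤ 1 := by
    intro k hk
    rw [ht]
    calc ∑ i, lam i ^ k ≤ ∑ i, lam i := by
          refine Finset.sum_le_sum fun i _ => ?_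
          simpa using pow_le_pow_of_le_one (hnn i) (hle1 i) hk
      _ = 1 := hsum
  have hm0 : (0:ℝ) < m := by exact_mod_cast (by omega : 0 < m)
  have hc : (0:ℝ) < (m:ℝ) ^ 2 + 2 * m := by positivity
  -- coefficient facts
  have hble : ∀ i ∈ Finset.Icc 1 n, (0:ℝ) ≤ 2 * (m:ℝ) - 4 * i + 4 := by
    intro i hi
    have h2 : i ≤ n := (Finset.mem_Icc.mp hi).2
    have : (i:ℝ) ≤ n := by exact_mod_cast h2
    have hnm : (2:ℝ) * n = m := by exact_mod_cast h2n
    nlinarith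
  have hterm_le : ∀ i ∈ Finset.Icc 1 n,
      (4 * (i : ℝ)) / ((m : ℝ) ^ 2 + 2 * m) * ((ρ ^ i).trace).re +
        (2 * (m : ℝ) - 4 * i + 4) / ((m : ℝ) ^ 2 + 2 * m) * ((ρ ^ (i + n)).trace).re ≤
      (2 * (m:ℝ) + 4) / ((m : ℝ) ^ 2 + 2 * m) := by
    intro i hi
    have h1 : 1 ≤ i := (Finset.mem_Icc.mp hi).1
    have ha : (0:ℝ) ≤ 4 * (i:ℝ) / ((m:ℝ) ^ 2 + 2 * m) := by positivity
    have hb : (0:ℝ) ≤ (2 * (m:ℝ) - 4 * i + 4) / ((m:ℝ) ^ 2 + 2 * m) :=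
      div_nonneg (hble i hi) hc.le
    have hti := htle i h1
    have hsi := htle (i + n) (by omega)
    have e1 : (4 * (i:ℝ)) / ((m:ℝ) ^ 2 + 2 * m) * ((ρ ^ i).trace).re ≤
        (4 * (i:ℝ)) / ((m:ℝ) ^ 2 + 2 * m) * 1 := by
      exact mul_le_mul_of_nonneg_left hti ha
    have e2 : (2 * (m:ℝ) - 4 * i + 4) / ((m:ℝ) ^ 2 + 2 * m) * ((ρ ^ (i + n)).trace).re ≤
        (2 * (m:ℝ) - 4 * i + 4) / ((m:ℝ) ^ 2 + 2 * m) * 1 := by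
      exact mul_le_mul_of_nonneg_left hsi hb
    have : (4 * (i:ℝ)) / ((m:ℝ) ^ 2 + 2 * m) + (2 * (m:ℝ) - 4 * i + 4) / ((m:ℝ) ^ 2 + 2 * m)
        = (2 * (m:ℝ) + 4) / ((m:ℝ) ^ 2 + 2 * m) := by ring
    linarith
  have hsum_coeff : ∑ _i ∈ Finset.Icc 1 n, (2 * (m:ℝ) + 4) / ((m:ℝ) ^ 2 + 2 * m) = 1 := by
    rw [Finset.sum_const, Nat.card_Icc, nsmul_eq_mul]
    have hnm : (2:ℝ) * n = m := by exact_mod_cast h2n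
    have : ((n + 1 - 1 : ℕ) : ℝ) = n := by push_cast; ring
    rw [this]
    field_simp
    nlinarith
  have hfle : ∑ i ∈ Finset.Icc 1 n,
      ((4 * (i : ℝ)) / ((m : ℝ) ^ 2 + 2 * m) * ((ρ ^ i).trace).re +
        (2 * (m : ℝ) - 4 * i + 4) / ((m : ℝ) ^ 2 + 2 * m) * ((ρ ^ (i + n)).trace).re) ≤ 1 := by
    calc _ ≤ ∑ _i ∈ Finset.Icc 1 n, (2 * (m:ℝ) + 4) / ((m:ℝ) ^ 2 + 2 * m) :=
          Finset.sum_le_sum hterm_le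
      _ = 1 := hsum_coeff
  have hfeq : fEven m ρ = 1 - ∑ i ∈ Finset.Icc 1 n,
      ((4 * (i : ℝ)) / ((m : ℝ) ^ 2 + 2 * m) * ((ρ ^ i).trace).re +
        (2 * (m : ℝ) - 4 * i + 4) / ((m : ℝ) ^ 2 + 2 * m) * ((ρ ^ (i + n)).trace).re) := rfl
  refine ⟨by rw [hfeq]; linarith, ?_, ?_⟩
  · -- fEven = 0 → ρ² = ρ
    intro h0
    rw [hfeq] at h0
    have hS : ∑ i ∈ Finset.Icc 1 n,
        ((4 * (i : ℝ)) / ((m : ℝ) ^ 2 + 2 * m) * ((ρ ^ i).trace).re +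
          (2 * (m : ℝ) - 4 * i + 4) / ((m : ℝ) ^ 2 + 2 * m) * ((ρ ^ (i + n)).trace).re)
        = ∑ _i ∈ Finset.Icc 1 n, (2 * (m:ℝ) + 4) / ((m:ℝ) ^ 2 + 2 * m) := by
      rw [hsum_coeff]; linarith
    have hpt := (Finset.sum_eq_sum_iff_of_le hterm_le).mp hS 1 (Finset.mem_Icc.mpr ⟨le_refl 1, hn1⟩)
    -- at i = 1
    have ht1 : ((ρ ^ 1).trace).re = 1 := by rw [pow_one, htr]; exact Complex.one_re
    rw [ht1] at hpt
    have hb1 : (0:ℝ) < 2 * (m:ℝ) - 4 * (1:ℕ) + 4 := by push_cast; linarith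
    have hs1 : ((ρ ^ (1 + n)).trace).re = 1 := by
      have hpt' := hpt
      push_cast at hpt'
      field_simp at hpt'
      have h2 : 2 * (m:ℝ) * ((ρ ^ (1 + n)).trace).re = 2 * (m:ℝ) * 1 := by
        rw [mul_one]; linarith
      exact mul_left_cancel₀ (by positivity : (2 * (m:ℝ)) ≠ 0) h2
    -- eigenvalue equality
    rw [ht] at hs1
    have hpt2 : ∀ i ∈ Finset.univ (α := Fin m), lam i ^ (1 + n) = lam i := by
      refine (Finset.sum_eq_sum_iff_of_le fun i _ => ?_).mp (by rw [hs1, hsum])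
      have := pow_le_pow_of_le_one (hnn i) (hle1 i) (by omega : 1 ≤ 1 + n)
      rwa [pow_one] at this
    have hsq : ∀ i, lam i ^ 2 = lam i := by
      intro i
      have h1 := hpt2 i (Finset.mem_univ i)
      have h2 : lam i ^ 2 ≤ lam i := by
        have := pow_le_pow_of_le_one (hnn i) (hle1 i) (by norm_num : 1 ≤ 2)
        rwa [pow_one] at this
      have h3 : lam i ≤ lam i ^ 2 := by
        calc lam i = lam i ^ (1 + n) := h1.symm
          _ ≤ lam i ^ 2 := pow_le_pow_of_le_one (hnn i) (hle1 i) (by omega)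
      linarith
    -- assemble
    have hD : (diagonal (RCLike.ofReal ∘ lam) : Matrix (Fin m) (Fin m) ℂ) ^ 2
        = diagonal (RCLike.ofReal ∘ lam) := by
      rw [Matrix.diagonal_pow]
      have hfun : (RCLike.ofReal ∘ lam : Fin m → ℂ) ^ 2 = RCLike.ofReal ∘ lam := by
        funext i
        simp only [Pi.pow_apply, Function.comp_apply]
        exact_mod_cast congrArg (Complex.ofReal) (hsq i)
      rw [hfun]
    calc ρ ^ 2 = _ := pow_conj_psd m ρ hρ 2
      _ = _ := by rw [hD, Unitary.conjStarAlgAut_apply]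
      _ = ρ := hρ.1.spectral_theorem.symm
  · -- ρ² = ρ → fEven = 0
    intro hpure
    have hpow : ∀ k, 1 ≤ k → ρ ^ k = ρ := by
      intro k hk
      induction k with
      | zero => omega
      | succ j ih =>
        rcases Nat.eq_zero_or_pos j with h | h
        · subst h; exact pow_one ρ
        · rw [pow_succ, ih h, ← pow_two, hpure]
    have htk : ∀ k, 1 ≤ k → ((ρ ^ k).trace).re = 1 := by
      intro k hk; rw [hpow k hk, htr]; exact Complex.one_re
    rw [hfeq]
    rw [show ∑ i ∈ Finset.Icc 1 n,
        ((4 * (i : ℝ)) / ((m : ℝ) ^ 2 + 2 * m) * ((ρ ^ i).trace).re +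
          (2 * (m : ℝ) - 4 * i + 4) / ((m : ℝ) ^ 2 + 2 * m) * ((ρ ^ (i + n)).trace).re)
        = ∑ _i ∈ Finset.Icc 1 n, (2 * (m:ℝ) + 4) / ((m:ℝ) ^ 2 + 2 * m) from ?_, hsum_coeff,
      sub_self]
    refine Finset.sum_congr rfl fun i hi => ?_
    have h1 : 1 ≤ i := (Finset.mem_Icc.mp hi).1
    rw [htk i h1, htk (i + n) (by omega)]
    ring
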